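/- If holomorphic functions f₀, ..., f_n on a connected open set U ⊆ ℂ satisfy: for every nonzero rational vector q ∈ ℚ^{n+1}, the function Σ qᵢfᵢ has no zero on U, and there exist real vectors r with Σ rᵢfᵢ(0) = 0, then for each such real relation the function Σ rᵢfᵢ vanishes identically on U. -/

import Mathlib

set_option maxHeartbeats 1000000

theorem stmt_16 {U : Set ℂ} (hU : IsOpen U) (hconn : IsConnected U)
    (h0 : (0 : ℂ) ∈ U) (n : ℕ) (f : Fin (n + 1) → ℂ → ℂ)
    (hf : ∀ i, DifferentiableOn ℂ (f i) U)
    (hq : ∀ q : Fin (n + 1) → ℚ, q ≠ 0 →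
      ∀ z ∈ U, (∑ i, (q i : ℂ) * f i z) ≠ 0)
    (r : Fin (n + 1) → ℝ) (hr : r ≠ 0)
    (hr0 : (∑ i, (r i : ℂ) * f i 0) = 0) :
    ∀ z ∈ U, (∑ i, (r i : ℂ) * f i z) = 0 := by
  set g : ℂ → ℂ := fun z => ∑ i, (r i : ℂ) * f i z with hg_def
  have hg_diff : DifferentiableOn ℂ g U := by
    apply DifferentiableOn.fun_sum
    intro i _
    exact (hf i).const_mul _
  have hg_an : AnalyticOnNhd ℂ g U := hg_diff.analyticOnNhd hU
  rcases (hg_an 0 h0).eventually_eq_zero_or_eventually_ne_zero with hcase | hcase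
  · exact fun z hz =>
      hg_an.eqOn_zero_of_preconnected_of_eventuallyEq_zero hconn.isPreconnected h0 hcase hz
  · exfalso
    -- get a radius ε with closedBall 0 ε ⊆ U and g ≠ 0 on the sphere
    obtain ⟨t, ht, htne⟩ : ∃ t > 0, ∀ z : ℂ, z ≠ 0 → dist z 0 < t → g z ≠ 0 := by
      have hmem : {z : ℂ | g z ≠ 0} ∈ nhdsWithin (0:ℂ) {(0:ℂ)}ᶜ := hcase
      rw [Metric.mem_nhdsWithin_iff] at hmem
      obtain ⟨t, ht, h⟩ := hmem
      exact ⟨t, ht, fun z hz hd => h ⟨Metric.mem_ball.mpr hd, hz⟩⟩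
    obtain ⟨t₂, ht₂, hball⟩ := Metric.isOpen_iff.mp hU 0 h0
    set ε : ℝ := min t t₂ / 2 with hε_def
    have hε : 0 < ε := by positivity
    have hcb : Metric.closedBall (0 : ℂ) ε ⊆ U := by
      intro z hz
      apply hball
      simp only [Metric.mem_closedBall] at hz
      simp only [Metric.mem_ball]
      calc dist z 0 ≤ ε := hz
        _ < t₂ := by
            rw [hε_def]
            have := min_le_right t t₂
            linarith [lt_min ht ht₂]
    have hsp : ∀ z ∈ Metric.sphere (0 : ℂ) ε, g z ≠ 0 := by
      intro z hz
      simp only [Metric.mem_sphere] at hz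
      apply htne
      · intro h; rw [h] at hz; simp at hz; linarith
      · rw [hz]
        calc ε < min t t₂ := by rw [hε_def]; linarith [lt_min ht ht₂]
          _ ≤ t := min_le_left _ _
    -- δ : minimum of ‖g‖ on the sphere
    have hsp_cpt : IsCompact (Metric.sphere (0 : ℂ) ε) := isCompact_sphere _ _
    have hsp_ne : (Metric.sphere (0 : ℂ) ε).Nonempty := by
      exact NormedSpace.sphere_nonempty.mpr hε.le
    have hg_cont : ContinuousOn g U := hg_diff.continuousOn
    have hg_cont' : ContinuousOn (fun z => ‖g z‖) (Metric.sphere (0 : ℂ) ε) := by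
      apply ContinuousOn.norm
      exact hg_cont.mono (fun z hz => hcb (Metric.sphere_subset_closedBall hz))
    obtain ⟨z₀, hz₀, hz₀min⟩ := hsp_cpt.exists_isMinOn hsp_ne hg_cont'
    set δ : ℝ := ‖g z₀‖ with hδ_def
    have hδ : 0 < δ := norm_pos_iff.mpr (hsp z₀ hz₀)
    -- C : bound for ∑ ‖f i z‖ on the closed ball
    have hcb_cpt : IsCompact (Metric.closedBall (0 : ℂ) ε) := isCompact_closedBall _ _
    have hF_cont : ContinuousOn (fun z => ∑ i, ‖f i z‖) (Metric.closedBall (0 : ℂ) ε) := by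
      apply continuousOn_finset_sum
      intro i _
      exact ((hf i).continuousOn.mono hcb).norm
    obtain ⟨z₁, hz₁, hz₁max⟩ := hcb_cpt.exists_isMaxOn
      ⟨0, Metric.mem_closedBall_self hε.le⟩ hF_cont
    set C : ℝ := (∑ i, ‖f i z₁‖) + 1 with hC_def
    have hC : 0 < C := by
      have : (0:ℝ) ≤ ∑ i, ‖f i z₁‖ := Finset.sum_nonneg fun i _ => norm_nonneg _
      linarith
    -- choose rational q close to r
    obtain ⟨j, hj⟩ : ∃ j, r j ≠ 0 := Function.ne_iff.mp hr
    set η : ℝ := min (δ / (3 * C)) |r j| with hη_def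
    have h3C : (0:ℝ) < 3 * C := by linarith
    have hη : 0 < η := lt_min (div_pos hδ h3C) (abs_pos.mpr hj)
    have hqex : ∀ i, ∃ q : ℚ, |r i - q| < η := fun i => exists_rat_near (r i) hη
    choose q hq_close using hqex
    have hq_ne : q ≠ 0 := by
      intro hq0
      have := hq_close j
      rw [hq0] at this
      simp only [Pi.zero_apply, Rat.cast_zero, sub_zero] at this
      exact absurd (lt_of_lt_of_le this (min_le_right _ _)) (lt_irrefl _)
    set h : ℂ → ℂ := fun z => ∑ i, (q i : ℂ) * f i z with hh_def
    have hh_ne : ∀ z ∈ U, h z ≠ 0 := hq q hq_ne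
    -- bound on the difference
    have hdiff_bound : ∀ z ∈ Metric.closedBall (0 : ℂ) ε, ‖h z - g z‖ ≤ δ / 3 := by
      intro z hz
      have hsum : h z - g z = ∑ i, ((q i : ℂ) - r i) * f i z := by
        simp only [hh_def, hg_def, ← Finset.sum_sub_distrib, sub_mul]
      rw [hsum]
      calc ‖∑ i, ((q i : ℂ) - r i) * f i z‖
          ≤ ∑ i, ‖((q i : ℂ) - r i) * f i z‖ := norm_sum_le _ _
        _ ≤ ∑ i, η * ‖f i z‖ := by
            apply Finset.sum_le_sum
            intro i _
            rw [norm_mul]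
            apply mul_le_mul_of_nonneg_right _ (norm_nonneg _)
            have : ((q i : ℂ) - r i) = (((q i : ℝ) - r i : ℝ) : ℂ) := by push_cast; ring
            rw [this, Complex.norm_real, Real.norm_eq_abs, abs_sub_comm]
            exact (hq_close i).le
        _ = η * ∑ i, ‖f i z‖ := by rw [Finset.mul_sum]
        _ ≤ η * C := by
            apply mul_le_mul_of_nonneg_left _ hη.le
            have := hz₁max hz
            simp only [Set.mem_setOf_eq] at this
            calc (∑ i, ‖f i z‖) ≤ ∑ i, ‖f i z₁‖ := this
              _ ≤ C := by rw [hC_def]; linarith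
        _ ≤ (δ / (3 * C)) * C := by
            apply mul_le_mul_of_nonneg_right _ hC.le
            exact min_le_left _ _
        _ = δ / 3 := by field_simp
    -- h is small at 0
    have h0cb : (0 : ℂ) ∈ Metric.closedBall (0 : ℂ) ε := Metric.mem_closedBall_self hε.le
    have hh0 : ‖h 0‖ ≤ δ / 3 := by
      have := hdiff_bound 0 h0cb
      rw [hg_def] at this
      simpa [hr0] using this
    -- h is large on the sphere
    have hh_sphere : ∀ z ∈ Metric.sphere (0 : ℂ) ε, 2 * δ / 3 ≤ ‖h z‖ := by
      intro z hz
      have h1 : δ ≤ ‖g z‖ := hz₀min hz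
      have h2 : ‖h z - g z‖ ≤ δ / 3 := hdiff_bound z (Metric.sphere_subset_closedBall hz)
      have h3 : ‖g z‖ ≤ ‖h z‖ + ‖h z - g z‖ := by
        calc ‖g z‖ = ‖h z - (h z - g z)‖ := by congr 1; ring
          _ ≤ ‖h z‖ + ‖h z - g z‖ := norm_sub_le _ _
      linarith
    -- maximum modulus principle for 1/h
    have hinv_bound : ‖(h 0)⁻¹‖ ≤ (2 * δ / 3)⁻¹ := by
      apply Complex.norm_le_of_forall_mem_frontier_norm_le (f := fun w => (h w)⁻¹)
        (Metric.isBounded_ball (x := (0:ℂ)) (r := ε))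
      · apply DifferentiableOn.diffContOnCl
        apply DifferentiableOn.inv
        · apply DifferentiableOn.fun_sum
          intro i _
          apply ((hf i).const_mul _).mono
          refine subset_trans ?_ hcb
          rw [closure_ball _ hε.ne']
        · intro z hz
          apply hh_ne
          apply hcb
          rw [closure_ball _ hε.ne'] at hz
          exact hz
      · intro z hz
        rw [frontier_ball _ hε.ne'] at hz
        rw [norm_inv]
        apply inv_anti₀ (by positivity) (hh_sphere z hz)
      · rw [closure_ball _ hε.ne']
        exact h0cb
    have hh0ne : h 0 ≠ 0 := hh_ne 0 h0
    rw [norm_inv] at hinv_bound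
    have h4 : 2 * δ / 3 ≤ ‖h 0‖ := by
      have hpos : 0 < ‖h 0‖ := norm_pos_iff.mpr hh0ne
      rw [inv_le_inv₀ hpos (by positivity)] at hinv_bound
      exact hinv_bound
    linarith
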